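/- arXiv:2401.14317 — 3 statements merged into one kernel-verified Lean document; each statement's English description precedes it below -/
import Mathlib

section
/- Let T be a finite index set and {v_i : i ∈ T} a family of vectors in ℝ^d such that A_T = Σ_{i∈T} v_i v_iᵀ is invertible, and let ℓ be a natural number with ℓ ≥ d. Then there exists a subset S ⊆ T with |S| ≤ ℓ such that A_S = Σ_{i∈S} v_i v_iᵀ is invertible and for every j ∈ T \ S one has v_jᵀ A_S⁻¹ v_j ≤ d/(ℓ − d + 1). -/
open Matrix

namespace LocalSearchAux

variable {d : ℕ} {ι : Type*} [DecidableEq ι]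

/-- `A_S = ∑_{i∈S} vᵢvᵢᵀ`. -/
noncomputable def outSum (v : ι → Fin d → ℝ) (S : Finset ι) : Matrix (Fin d) (Fin d) ℝ :=
  ∑ i ∈ S, vecMulVec (v i) (v i)

lemma vecMulVec_mulVec' (w u x : Fin d → ℝ) :
    vecMulVec w u *ᵥ x = (u ⬝ᵥ x) • w := by
  ext k
  simp [vecMulVec, mulVec, dotProduct, Finset.mul_sum, mul_assoc, mul_comm, mul_left_comm]

lemma sum_mulVec' (S : Finset ι) (M : ι → Matrix (Fin d) (Fin d) ℝ) (x : Fin d → ℝ) :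
    (∑ i ∈ S, M i) *ᵥ x = ∑ i ∈ S, M i *ᵥ x := by
  ext k
  simp only [mulVec, dotProduct, Matrix.sum_apply, Finset.sum_apply, Finset.sum_mul]
  rw [Finset.sum_comm]

lemma dotProduct_sum' (S : Finset ι) (x : Fin d → ℝ) (f : ι → Fin d → ℝ) :
    x ⬝ᵥ (∑ i ∈ S, f i) = ∑ i ∈ S, x ⬝ᵥ f i := by
  simp only [dotProduct, Finset.sum_apply, Finset.mul_sum]
  rw [Finset.sum_comm]

lemma quad_eq (v : ι → Fin d → ℝ) (S : Finset ι) (x : Fin d → ℝ) :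
    x ⬝ᵥ (outSum v S *ᵥ x) = ∑ i ∈ S, (v i ⬝ᵥ x) ^ 2 := by
  rw [outSum, sum_mulVec', dotProduct_sum']
  refine Finset.sum_congr rfl fun i _ => ?_
  rw [vecMulVec_mulVec', dotProduct_smul, smul_eq_mul, dotProduct_comm, sq]

lemma herm (v : ι → Fin d → ℝ) (S : Finset ι) : (outSum v S).IsHermitian := by
  unfold Matrix.IsHermitian
  ext k l
  simp only [outSum, conjTranspose_apply, Matrix.sum_apply, vecMulVec, of_apply, star_trivial]
  exact Finset.sum_congr rfl fun i _ => mul_comm _ _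

set_option linter.unusedSectionVars false

lemma posDef_of_isUnit {v : ι → Fin d → ℝ} {S : Finset ι}
    (h : IsUnit (outSum v S).det) : (outSum v S).PosDef := by
  refine Matrix.PosDef.of_dotProduct_mulVec_pos (herm v S) fun x hx => ?_
  rw [star_trivial]
  rcases lt_or_eq_of_le (Finset.sum_nonneg (fun i _ => sq_nonneg (v i ⬝ᵥ x)) :
      (0:ℝ) ≤ ∑ i ∈ S, (v i ⬝ᵥ x) ^ 2) with hlt | heq
  · rwa [quad_eq]
  · exfalso
    apply hx
    have hall : ∀ i ∈ S, v i ⬝ᵥ x = 0 := by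
      intro i hi
      have := (Finset.sum_eq_zero_iff_of_nonneg
        (fun i _ => sq_nonneg (v i ⬝ᵥ x))).mp heq.symm i hi
      exact pow_eq_zero_iff (n := 2) (by norm_num) |>.mp this
    have hAx : outSum v S *ᵥ x = 0 := by
      rw [outSum, sum_mulVec']
      refine Finset.sum_eq_zero fun i hi => ?_
      rw [vecMulVec_mulVec', hall i hi, zero_smul]
    calc x = ((outSum v S)⁻¹ * outSum v S) *ᵥ x := by
              rw [Matrix.nonsing_inv_mul _ h, Matrix.one_mulVec]
      _ = (outSum v S)⁻¹ *ᵥ (outSum v S *ᵥ x) := by rw [Matrix.mulVec_mulVec]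
      _ = 0 := by rw [hAx, Matrix.mulVec_zero]

lemma det_pos' {v : ι → Fin d → ℝ} {S : Finset ι}
    (h : IsUnit (outSum v S).det) : 0 < (outSum v S).det :=
  (posDef_of_isUnit h).det_pos

lemma symm_dot {M : Matrix (Fin d) (Fin d) ℝ} (hM : M.IsHermitian)
    (x y : Fin d → ℝ) : x ⬝ᵥ (M *ᵥ y) = y ⬝ᵥ (M *ᵥ x) := by
  have hsym : ∀ k l, M k l = M l k := by
    intro k l
    have := congrFun (congrFun hM.eq l) k
    simpa [conjTranspose_apply] using this
  simp only [dotProduct, mulVec, Finset.mul_sum]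
  rw [Finset.sum_comm]
  exact Finset.sum_congr rfl fun k _ => Finset.sum_congr rfl fun l _ => by
    rw [hsym l k]; ring

lemma dot_eq_trace (M : Matrix (Fin d) (Fin d) ℝ) (a b : Fin d → ℝ) :
    b ⬝ᵥ (M *ᵥ a) = Matrix.trace (M * vecMulVec a b) := by
  simp only [Matrix.trace, Matrix.diag, Matrix.mul_apply, vecMulVec, of_apply,
    dotProduct, mulVec, Finset.mul_sum]
  exact Finset.sum_congr rfl fun k _ => Finset.sum_congr rfl fun l _ => by ring

lemma sum_leverage {v : ι → Fin d → ℝ} {S : Finset ι}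
    (h : IsUnit (outSum v S).det) :
    ∑ i ∈ S, v i ⬝ᵥ ((outSum v S)⁻¹ *ᵥ v i) = d := by
  have : ∀ i ∈ S, v i ⬝ᵥ ((outSum v S)⁻¹ *ᵥ v i)
      = Matrix.trace ((outSum v S)⁻¹ * vecMulVec (v i) (v i)) := fun i _ =>
    dot_eq_trace _ _ _
  rw [Finset.sum_congr rfl this, ← Matrix.trace_sum]
  rw [← Finset.mul_sum, ← outSum, Matrix.nonsing_inv_mul _ h, Matrix.trace_one]
  simp


lemma det_add_smul_outer {A : Matrix (Fin d) (Fin d) ℝ} (hA : IsUnit A.det)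
    (u : Fin d → ℝ) (c : ℝ) :
    (A + c • vecMulVec u u).det = A.det * (1 + c * (u ⬝ᵥ (A⁻¹ *ᵥ u))) := by
  have hUV : c • vecMulVec u u = replicateCol (Fin 1) u * (c • replicateRow (Fin 1) u) := by
    rw [Matrix.mul_smul, vecMulVec_eq (Fin 1)]; rfl
  rw [hUV, Matrix.det_add_mul _ _ hA]
  congr 1
  rw [show ((1 : Matrix (Fin 1) (Fin 1) ℝ) + c • replicateRow (Fin 1) u * A⁻¹ * replicateCol (Fin 1) u).det
      = ((1 : Matrix (Fin 1) (Fin 1) ℝ) + c • replicateRow (Fin 1) u * A⁻¹ * replicateCol (Fin 1) u) 0 0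
    from Matrix.det_fin_one _]
  simp only [Matrix.add_apply, Matrix.one_apply_eq, Matrix.mul_apply, Matrix.smul_apply,
    replicateRow_apply, replicateCol_apply, smul_eq_mul, dotProduct, mulVec, Finset.mul_sum, Finset.sum_mul]
  congr 1
  rw [Finset.sum_comm]
  exact Finset.sum_congr rfl fun k _ => Finset.sum_congr rfl fun l _ => by ring

lemma det_add_outer_sub_outer {A : Matrix (Fin d) (Fin d) ℝ} (hA : IsUnit A.det)
    (hs : A⁻¹.IsHermitian) (u w : Fin d → ℝ) :
    (A + (vecMulVec u u - vecMulVec w w)).det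
      = A.det * ((1 + u ⬝ᵥ (A⁻¹ *ᵥ u)) * (1 - w ⬝ᵥ (A⁻¹ *ᵥ w))
          + (w ⬝ᵥ (A⁻¹ *ᵥ u)) ^ 2) := by
  set U : Matrix (Fin d) (Fin 2) ℝ := Matrix.of fun k t => if t = 0 then u k else w k with hU
  set V : Matrix (Fin 2) (Fin d) ℝ := Matrix.of fun t k => if t = 0 then u k else -(w k) with hV
  have hUV : vecMulVec u u - vecMulVec w w = U * V := by
    ext k l
    simp [hU, hV, Matrix.mul_apply, Fin.sum_univ_two, vecMulVec]
    ring
  rw [hUV, Matrix.det_add_mul _ _ hA, Matrix.det_fin_two]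
  congr 1
  have entry : ∀ (a b : Fin d → ℝ) (s t : Fin 2),
      (V * A⁻¹ * U) s t = (if s = 0 then (1:ℝ) else -1) *
        ((if s = 0 then u else w) ⬝ᵥ (A⁻¹ *ᵥ (if t = 0 then u else w))) := by
    intro a b s t
    simp only [Matrix.mul_apply, hU, hV, Matrix.of_apply, dotProduct, mulVec,
      Finset.mul_sum, Finset.sum_mul]
    rw [Finset.sum_comm]
    refine Finset.sum_congr rfl fun k _ => Finset.sum_congr rfl fun l _ => ?_
    fin_cases s <;> fin_cases t <;> simp <;> ring
  have h00 : (V * A⁻¹ * U) 0 0 = u ⬝ᵥ (A⁻¹ *ᵥ u) := by simpa using entry u u 0 0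
  have h01 : (V * A⁻¹ * U) 0 1 = u ⬝ᵥ (A⁻¹ *ᵥ w) := by simpa using entry u u 0 1
  have h10 : (V * A⁻¹ * U) 1 0 = -(w ⬝ᵥ (A⁻¹ *ᵥ u)) := by simpa using entry u u 1 0
  have h11 : (V * A⁻¹ * U) 1 1 = -(w ⬝ᵥ (A⁻¹ *ᵥ w)) := by simpa using entry u u 1 1
  rw [Matrix.add_apply, Matrix.add_apply, Matrix.add_apply, Matrix.add_apply,
    h00, h01, h10, h11, Matrix.one_apply_eq, Matrix.one_apply_eq,
    Matrix.one_apply_ne (by decide : (0 : Fin 2) ≠ 1),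
    Matrix.one_apply_ne (by decide : (1 : Fin 2) ≠ 0),
    symm_dot hs u w]
  ring


lemma exists_invertible_subset (v : ι → Fin d → ℝ) :
    ∀ n (T : Finset ι), T.card = n → IsUnit (outSum v T).det →
    ∀ ℓ : ℕ, d ≤ ℓ → ∃ S ⊆ T, S.card ≤ ℓ ∧ IsUnit (outSum v S).det := by
  intro n
  induction n using Nat.strong_induction_on with
  | _ n ih =>
    intro T hTn hT ℓ hℓ
    by_cases hcard : T.card ≤ ℓ
    · exact ⟨T, le_refl _, hcard, hT⟩
    push_neg at hcard
    have hsum := sum_leverage hT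
    have hex : ∃ i ∈ T, v i ⬝ᵥ ((outSum v T)⁻¹ *ᵥ v i) < 1 := by
      by_contra hcon
      push_neg at hcon
      have h1 : (T.card : ℝ) ≤ d := by
        calc (T.card : ℝ) = ∑ _i ∈ T, (1:ℝ) := by simp
          _ ≤ ∑ i ∈ T, v i ⬝ᵥ ((outSum v T)⁻¹ *ᵥ v i) :=
              Finset.sum_le_sum (fun i hi => hcon i hi)
          _ = d := hsum
      have h2 : T.card ≤ d := by exact_mod_cast h1
      omega
    obtain ⟨i, hiT, hσ⟩ := hex
    have he : outSum v (T.erase i) = outSum v T + (-1 : ℝ) • vecMulVec (v i) (v i) := by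
      rw [outSum, outSum, Finset.sum_erase_eq_sub hiT]
      simp [sub_eq_add_neg]
    have hdet : (outSum v (T.erase i)).det
        = (outSum v T).det * (1 + (-1) * (v i ⬝ᵥ ((outSum v T)⁻¹ *ᵥ v i))) := by
      rw [he, det_add_smul_outer hT]
    have hpos : 0 < (outSum v (T.erase i)).det := by
      rw [hdet]
      have := det_pos' hT
      nlinarith
    have hUnit : IsUnit (outSum v (T.erase i)).det :=
      isUnit_iff_ne_zero.mpr (ne_of_gt hpos)
    obtain ⟨S, hS1, hS2, hS3⟩ := ih (T.erase i).card
      (by rw [Finset.card_erase_of_mem hiT]; omega) (T.erase i) rfl hUnit ℓ hℓ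
    exact ⟨S, hS1.trans (Finset.erase_subset _ _), hS2, hS3⟩

end LocalSearchAux

open LocalSearchAux

/-- For vectors `v i`, `i ∈ T`, in `ℝ^d` with `∑_{i∈T} vᵢvᵢᵀ` invertible and
`ℓ ≥ d`, there is `S ⊆ T` with `|S| ≤ ℓ` such that `A_S = ∑_{i∈S} vᵢvᵢᵀ` is invertible and
`vⱼᵀ A_S⁻¹ vⱼ ≤ d/(ℓ − d + 1)` for all `j ∈ T \ S`. -/
theorem local_search_lemma_param {d : ℕ} {ι : Type*} [DecidableEq ι]
    (T : Finset ι) (v : ι → Fin d → ℝ)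
    (hT : IsUnit (∑ i ∈ T, vecMulVec (v i) (v i)).det)
    (ℓ : ℕ) (hℓ : d ≤ ℓ) :
    ∃ S ⊆ T, S.card ≤ ℓ ∧
      IsUnit (∑ i ∈ S, vecMulVec (v i) (v i)).det ∧
      ∀ j ∈ T \ S,
        v j ⬝ᵥ ((∑ i ∈ S, vecMulVec (v i) (v i))⁻¹ *ᵥ v j) ≤ (d : ℝ) / ((ℓ : ℝ) - d + 1) := by
  classical
  obtain ⟨S₀, hS₀T, hS₀c, hS₀u⟩ :=
    exists_invertible_subset v T.card T rfl hT ℓ hℓ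
  set 𝒞 : Finset (Finset ι) := T.powerset.filter
      (fun S => S.card ≤ ℓ ∧ IsUnit (outSum v S).det) with h𝒞
  have hne : 𝒞.Nonempty :=
    ⟨S₀, Finset.mem_filter.mpr ⟨Finset.mem_powerset.mpr hS₀T, hS₀c, hS₀u⟩⟩
  obtain ⟨S, hS𝒞, hmax⟩ := Finset.exists_max_image 𝒞 (fun S => (outSum v S).det) hne
  obtain ⟨hSpow, hScard, hSu⟩ := Finset.mem_filter.mp hS𝒞
  have hST := Finset.mem_powerset.mp hSpow
  refine ⟨S, hST, hScard, hSu, ?_⟩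
  intro j hj
  obtain ⟨hjT, hjS⟩ := Finset.mem_sdiff.mp hj
  by_contra hτ
  push_neg at hτ
  set A := outSum v S with hA
  have hApos : 0 < A.det := det_pos' hSu
  set τ := v j ⬝ᵥ (A⁻¹ *ᵥ v j) with hτdef
  have hdR : (d:ℝ) ≤ (ℓ:ℝ) := by exact_mod_cast hℓ
  have hden : (0:ℝ) < (ℓ:ℝ) - (d:ℝ) + 1 := by linarith
  have hτ0 : 0 < τ := lt_of_le_of_lt (div_nonneg (by positivity) hden.le) hτ
  rcases lt_or_eq_of_le hScard with hlt | hceq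
  · -- |S| < ℓ : add j
    have hins : outSum v (insert j S) = A + (1:ℝ) • vecMulVec (v j) (v j) := by
      rw [outSum, Finset.sum_insert hjS, one_smul, add_comm, hA, outSum]
    have hdet' : (outSum v (insert j S)).det = A.det * (1 + 1 * τ) := by
      rw [hins, det_add_smul_outer hSu]
    have hmem : insert j S ∈ 𝒞 := by
      refine Finset.mem_filter.mpr ⟨Finset.mem_powerset.mpr (Finset.insert_subset hjT hST),
        ?_, ?_⟩
      · rw [Finset.card_insert_of_notMem hjS]; omega
      · rw [hdet']; exact isUnit_iff_ne_zero.mpr (by nlinarith)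
    have := hmax _ hmem
    rw [hdet'] at this
    nlinarith
  · -- |S| = ℓ : swap
    have hAinvherm : (A⁻¹).IsHermitian := ((posDef_of_isUnit hSu).inv).isHermitian
    have hsumσ : ∑ i ∈ S, v i ⬝ᵥ (A⁻¹ *ᵥ v i) = d := sum_leverage hSu
    have hsumc : ∑ i ∈ S, (v i ⬝ᵥ (A⁻¹ *ᵥ v j)) ^ 2 = τ := by
      have hq := quad_eq v S (A⁻¹ *ᵥ v j)
      rw [← hA] at hq
      rw [← hq, Matrix.mulVec_mulVec, Matrix.mul_nonsing_inv _ hSu, Matrix.one_mulVec,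
        dotProduct_comm]
    have hkey : ∑ _i ∈ S, (1:ℝ) <
        ∑ i ∈ S, ((1 + τ) * (1 - v i ⬝ᵥ (A⁻¹ *ᵥ v i)) + (v i ⬝ᵥ (A⁻¹ *ᵥ v j)) ^ 2) := by
      have hτℓ : (d:ℝ) < τ * ((ℓ:ℝ) - d + 1) := (div_lt_iff₀ hden).mp hτ
      have hexp : ∑ i ∈ S, ((1 + τ) * (1 - v i ⬝ᵥ (A⁻¹ *ᵥ v i))
            + (v i ⬝ᵥ (A⁻¹ *ᵥ v j)) ^ 2)
          = (1 + τ) * ((S.card : ℝ) - d) + τ := by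
        rw [Finset.sum_add_distrib, hsumc, ← Finset.mul_sum, Finset.sum_sub_distrib, hsumσ]
        simp
      rw [hexp, Finset.sum_const, nsmul_eq_mul, mul_one, hceq]
      nlinarith
    obtain ⟨i, hiS, hfi⟩ := Finset.exists_lt_of_sum_lt hkey
    have hjS' : j ∉ S.erase i := fun h => hjS (Finset.erase_subset _ _ h)
    have hout' : outSum v (insert j (S.erase i))
        = A + (vecMulVec (v j) (v j) - vecMulVec (v i) (v i)) := by
      rw [outSum, Finset.sum_insert hjS', Finset.sum_erase_eq_sub hiS, hA, outSum]
      abel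
    have hdet' : (outSum v (insert j (S.erase i))).det
        = A.det * ((1 + τ) * (1 - v i ⬝ᵥ (A⁻¹ *ᵥ v i)) + (v i ⬝ᵥ (A⁻¹ *ᵥ v j)) ^ 2) := by
      rw [hout', det_add_outer_sub_outer hSu hAinvherm]
    have hmem : insert j (S.erase i) ∈ 𝒞 := by
      refine Finset.mem_filter.mpr ⟨Finset.mem_powerset.mpr
        (Finset.insert_subset hjT ((Finset.erase_subset _ _).trans hST)), ?_, ?_⟩
      · rw [Finset.card_insert_of_notMem hjS', Finset.card_erase_of_mem hiS]
        have : 1 ≤ S.card := Finset.card_pos.mpr ⟨i, hiS⟩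
        omega
      · rw [hdet']; exact isUnit_iff_ne_zero.mpr (by nlinarith)
    have := hmax _ hmem
    rw [hdet'] at this
    nlinarith
end

section
/- Let S be a finite index set with |S| = ℓ where ℓ ≥ d, let {v_i : i ∈ S} be vectors in ℝ^d with A = Σ_{i∈S} v_i v_iᵀ invertible, and let w ∈ ℝ^d be a vector such that for every i ∈ S, (1 − v_iᵀA⁻¹v_i)·(1 + wᵀA⁻¹w) + (v_iᵀA⁻¹w)² ≤ 1. Then wᵀA⁻¹w ≤ d/(ℓ − d + 1). -/
/-!
Write `A = ∑ vᵢvᵢᵀ` and `t = wᵀA⁻¹w`. The leverage scores `vᵢᵀA⁻¹vᵢ` sum to `tr (A⁻¹A) = d`, and the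
squared cross terms `(vᵢᵀA⁻¹w)²` sum to `(A⁻¹w)ᵀA(A⁻¹w) = t`. Summing the hypothesis over the `ℓ`
indices therefore gives `(ℓ - d)(1 + t) + t ≤ ℓ`, that is `(ℓ - d + 1) t ≤ d`.
-/

open Matrix

namespace Matrix

variable {n ι R : Type*} [Fintype n]

theorem dotProduct_vecMulVec_mulVec [CommSemiring R] (x a b y : n → R) :
    x ⬝ᵥ (vecMulVec a b *ᵥ y) = (x ⬝ᵥ a) * (b ⬝ᵥ y) := by
  rw [dotProduct_mulVec, vecMul_vecMulVec, smul_dotProduct, smul_eq_mul]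

theorem sum_sq_dotProduct_eq_dotProduct_sum_vecMulVec_mulVec [CommSemiring R] (S : Finset ι)
    (v : ι → n → R) (u : n → R) :
    ∑ i ∈ S, (v i ⬝ᵥ u) ^ 2 = u ⬝ᵥ ((∑ i ∈ S, vecMulVec (v i) (v i)) *ᵥ u) := by
  rw [sum_mulVec, dotProduct_sum]
  refine Finset.sum_congr rfl fun i _ => ?_
  rw [dotProduct_vecMulVec_mulVec, dotProduct_comm u, sq]

variable [DecidableEq n] [CommRing R] (S : Finset ι) (v : ι → n → R)

theorem sum_dotProduct_inv_sum_vecMulVec_mulVec_self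
    (hA : IsUnit (∑ i ∈ S, vecMulVec (v i) (v i)).det) :
    ∑ i ∈ S, v i ⬝ᵥ ((∑ j ∈ S, vecMulVec (v j) (v j))⁻¹ *ᵥ v i) = Fintype.card n := by
  set A := ∑ j ∈ S, vecMulVec (v j) (v j)
  calc ∑ i ∈ S, v i ⬝ᵥ (A⁻¹ *ᵥ v i)
      = ∑ i ∈ S, trace (A⁻¹ * vecMulVec (v i) (v i)) := by
        simp only [mul_vecMulVec, trace_vecMulVec, dotProduct_comm (v _)]
    _ = trace (A⁻¹ * A) := by rw [← trace_sum, ← Finset.mul_sum]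
    _ = Fintype.card n := by rw [nonsing_inv_mul A hA, trace_one]

theorem sum_sq_dotProduct_inv_sum_vecMulVec_mulVec
    (hA : IsUnit (∑ i ∈ S, vecMulVec (v i) (v i)).det) (w : n → R) :
    ∑ i ∈ S, (v i ⬝ᵥ ((∑ j ∈ S, vecMulVec (v j) (v j))⁻¹ *ᵥ w)) ^ 2 =
      w ⬝ᵥ ((∑ j ∈ S, vecMulVec (v j) (v j))⁻¹ *ᵥ w) := by
  rw [sum_sq_dotProduct_eq_dotProduct_sum_vecMulVec_mulVec, mulVec_mulVec,
    mul_nonsing_inv _ hA, one_mulVec, dotProduct_comm]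

end Matrix

/-- If `|S| = ℓ ≥ d`, `A = ∑_{i∈S} vᵢvᵢᵀ` is invertible, and
`(1 − vᵢᵀA⁻¹vᵢ)(1 + wᵀA⁻¹w) + (vᵢᵀA⁻¹w)² ≤ 1` for all `i ∈ S`, then
`wᵀA⁻¹w ≤ d/(ℓ − d + 1)`. -/
theorem local_opt_implies_small_leverage {d : ℕ} {ι : Type*} (S : Finset ι) (ℓ : ℕ)
    (hcard : S.card = ℓ) (hℓ : d ≤ ℓ) (v : ι → Fin d → ℝ)
    (hA : IsUnit (∑ i ∈ S, vecMulVec (v i) (v i)).det) (w : Fin d → ℝ)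
    (hswap : ∀ i ∈ S,
      (1 - v i ⬝ᵥ ((∑ j ∈ S, vecMulVec (v j) (v j))⁻¹ *ᵥ v i)) *
        (1 + w ⬝ᵥ ((∑ j ∈ S, vecMulVec (v j) (v j))⁻¹ *ᵥ w)) +
        (v i ⬝ᵥ ((∑ j ∈ S, vecMulVec (v j) (v j))⁻¹ *ᵥ w)) ^ 2 ≤ 1) :
    w ⬝ᵥ ((∑ j ∈ S, vecMulVec (v j) (v j))⁻¹ *ᵥ w) ≤ (d : ℝ) / ((ℓ : ℝ) - d + 1) := by
  set A := ∑ j ∈ S, vecMulVec (v j) (v j)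
  set t := w ⬝ᵥ (A⁻¹ *ᵥ w)
  have hleverage := sum_dotProduct_inv_sum_vecMulVec_mulVec_self S v hA
  have hcross := sum_sq_dotProduct_inv_sum_vecMulVec_mulVec S v hA w
  have hsum : ((ℓ : ℝ) - d) * (1 + t) + t ≤ ℓ := by
    calc ((ℓ : ℝ) - d) * (1 + t) + t
        = ∑ i ∈ S, ((1 - v i ⬝ᵥ (A⁻¹ *ᵥ v i)) * (1 + t) + (v i ⬝ᵥ (A⁻¹ *ᵥ w)) ^ 2) := by
          rw [Finset.sum_add_distrib, hcross, ← Finset.sum_mul, Finset.sum_sub_distrib,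
            hleverage, Finset.sum_const, hcard, Fintype.card_fin, nsmul_one]
      _ ≤ ∑ _i ∈ S, (1 : ℝ) := Finset.sum_le_sum hswap
      _ = ℓ := by rw [Finset.sum_const, hcard, nsmul_one]
  have hpos : (0 : ℝ) < ℓ - d + 1 := by
    have : (d : ℝ) ≤ ℓ := by exact_mod_cast hℓ
    linarith
  rw [le_div_iff₀ hpos]
  linarith
end

section
/- Let u_1, …, u_m ∈ ℝ^d satisfy Σ_{i=1}^m u_i u_iᵀ = I_d, let δ ∈ [0, 1/2), and for each i ∈ [m] define v_{i1} = (u_i, 0) ∈ ℝ^{2d} and v_{i2} = (0, u_i) ∈ ℝ^{2d} (the vector u_i placed in the first, respectively second, block of d coordinates). Then there exists a choice function σ : [m] → {1,2} with (1/2 − δ)·I_{2d} ⪯ Σ_{i=1}^m v_{iσ(i)} v_{iσ(i)}ᵀ if and only if there exists a set T ⊆ [m] with (1/2 − δ)·I_d ⪯ Σ_{i∈T} u_i u_iᵀ ⪯ (1/2 + δ)·I_d. -/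
open Matrix

lemma posSemidef_fromBlocks_diag {n m : Type*} [Fintype n] [Fintype m]
    (A : Matrix n n ℝ) (B : Matrix m m ℝ) :
    (fromBlocks A 0 0 B).PosSemidef ↔ A.PosSemidef ∧ B.PosSemidef := by
  simp only [posSemidef_iff_dotProduct_mulVec]
  constructor
  · rintro ⟨hH, hQ⟩
    rw [isHermitian_fromBlocks_iff] at hH
    refine ⟨⟨hH.1, fun x => ?_⟩, ⟨hH.2.2.2, fun x => ?_⟩⟩
    · have := hQ (Sum.elim x 0)
      simpa [fromBlocks_mulVec, sumElim_dotProduct_sumElim] using this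
    · have := hQ (Sum.elim 0 x)
      simpa [fromBlocks_mulVec, sumElim_dotProduct_sumElim] using this
  · rintro ⟨hA, hB⟩
    refine ⟨isHermitian_fromBlocks_iff.mpr ⟨hA.1, by simp, by simp, hB.1⟩, fun x => ?_⟩
    have hx : x = Sum.elim (x ∘ Sum.inl) (x ∘ Sum.inr) := by
      ext (i | i) <;> rfl
    rw [hx, fromBlocks_mulVec]
    simp only [Matrix.zero_mulVec, add_zero, zero_add, star_trivial,
      sumElim_dotProduct_sumElim]
    exact add_nonneg (hA.2 (x ∘ Sum.inl)) (hB.2 (x ∘ Sum.inr))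

lemma vmv_inl {d : ℕ} (w : Fin d → ℝ) :
    vecMulVec ((Sum.elim w (fun _ => (0:ℝ))) : Fin d ⊕ Fin d → ℝ)
        ((Sum.elim w (fun _ => (0:ℝ))) : Fin d ⊕ Fin d → ℝ) =
      fromBlocks (vecMulVec w w) 0 0 0 := by
  ext (i | i) (j | j) <;> simp [vecMulVec_apply, fromBlocks]

lemma vmv_inr {d : ℕ} (w : Fin d → ℝ) :
    vecMulVec ((Sum.elim (fun _ => (0:ℝ)) w) : Fin d ⊕ Fin d → ℝ)
        ((Sum.elim (fun _ => (0:ℝ)) w) : Fin d ⊕ Fin d → ℝ) =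
      fromBlocks 0 0 0 (vecMulVec w w) := by
  ext (i | i) (j | j) <;> simp [vecMulVec_apply, fromBlocks]

lemma sum_fromBlocks_left {ι : Type*} {d : ℕ} (s : Finset ι) (f : ι → Matrix (Fin d) (Fin d) ℝ) :
    ∑ i ∈ s, (fromBlocks (f i) 0 0 0 : Matrix (Fin d ⊕ Fin d) (Fin d ⊕ Fin d) ℝ) = fromBlocks (∑ i ∈ s, f i) 0 0 0 := by
  classical
  induction s using Finset.induction with
  | empty => ext (i | i) (j | j) <;> simp [fromBlocks]
  | insert _ _ h ih =>
      rw [Finset.sum_insert h, Finset.sum_insert h, ih, fromBlocks_add]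
      simp

lemma sum_fromBlocks_right {ι : Type*} {d : ℕ} (s : Finset ι) (f : ι → Matrix (Fin d) (Fin d) ℝ) :
    ∑ i ∈ s, (fromBlocks 0 0 0 (f i) : Matrix (Fin d ⊕ Fin d) (Fin d ⊕ Fin d) ℝ) = fromBlocks 0 0 0 (∑ i ∈ s, f i) := by
  classical
  induction s using Finset.induction with
  | empty => ext (i | i) (j | j) <;> simp [fromBlocks]
  | insert _ _ h ih =>
      rw [Finset.sum_insert h, Finset.sum_insert h, ih, fromBlocks_add]
      simp

lemma heq_aux {d : ℕ} (A : Matrix (Fin d) (Fin d) ℝ) (δ : ℝ) :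
    (1 : Matrix (Fin d) (Fin d) ℝ) - A - (1/2 - δ) • 1 = (1/2 + δ) • 1 - A := by
  ext i j
  simp only [Matrix.sub_apply, Matrix.smul_apply, Matrix.one_apply, smul_eq_mul]
  split_ifs <;> ring

/-- with `∑ᵢ uᵢuᵢᵀ = I_d`, `δ ∈ [0, 1/2)`, and block vectors
`v_{i1} = (uᵢ, 0)`, `v_{i2} = (0, uᵢ)` in `ℝ^{2d}`, there exists a choice function
`σ : [m] → {1,2}` with `(1/2 − δ)·I_{2d} ⪯ ∑ᵢ v_{iσ(i)}v_{iσ(i)}ᵀ` iff there exists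
`T ⊆ [m]` with `(1/2 − δ)·I_d ⪯ ∑_{i∈T} uᵢuᵢᵀ ⪯ (1/2 + δ)·I_d`. -/
theorem ks_partition_equivalence {d m : ℕ} (u : Fin m → Fin d → ℝ)
    (hu : ∑ i, vecMulVec (u i) (u i) = (1 : Matrix (Fin d) (Fin d) ℝ))
    (δ : ℝ) (hδ0 : 0 ≤ δ) (hδ : δ < 1 / 2)
    (v : Fin m → Fin 2 → (Fin d ⊕ Fin d → ℝ))
    (hv1 : ∀ i, v i 0 = Sum.elim (u i) (fun _ => (0 : ℝ)))
    (hv2 : ∀ i, v i 1 = Sum.elim (fun _ => (0 : ℝ)) (u i)) :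
    (∃ σ : Fin m → Fin 2,
        ((∑ i, vecMulVec (v i (σ i)) (v i (σ i))) -
          (1 / 2 - δ) • (1 : Matrix (Fin d ⊕ Fin d) (Fin d ⊕ Fin d) ℝ)).PosSemidef) ↔
    (∃ T : Finset (Fin m),
        ((∑ i ∈ T, vecMulVec (u i) (u i)) -
          (1 / 2 - δ) • (1 : Matrix (Fin d) (Fin d) ℝ)).PosSemidef ∧
        ((1 / 2 + δ) • (1 : Matrix (Fin d) (Fin d) ℝ) -
          ∑ i ∈ T, vecMulVec (u i) (u i)).PosSemidef) := by
  have key : ∀ σ : Fin m → Fin 2,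
      ∑ i, vecMulVec (v i (σ i)) (v i (σ i)) =
        fromBlocks (∑ i ∈ Finset.univ.filter (fun i => σ i = 0), vecMulVec (u i) (u i)) 0 0
          (∑ i ∈ Finset.univ.filter (fun i => ¬ σ i = 0), vecMulVec (u i) (u i)) := by
    intro σ
    rw [← Finset.sum_filter_add_sum_filter_not Finset.univ (fun i => σ i = 0)]
    have h1 : ∑ i ∈ Finset.univ.filter (fun i => σ i = 0),
        vecMulVec (v i (σ i)) (v i (σ i)) =
        fromBlocks (∑ i ∈ Finset.univ.filter (fun i => σ i = 0), vecMulVec (u i) (u i)) 0 0 0 := by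
      rw [← sum_fromBlocks_left]
      refine Finset.sum_congr rfl (fun i hi => ?_)
      simp only [Finset.mem_filter] at hi
      rw [hi.2, hv1, vmv_inl]
    have h2 : ∑ i ∈ Finset.univ.filter (fun i => ¬ σ i = 0),
        vecMulVec (v i (σ i)) (v i (σ i)) =
        fromBlocks 0 0 0
          (∑ i ∈ Finset.univ.filter (fun i => ¬ σ i = 0), vecMulVec (u i) (u i)) := by
      rw [← sum_fromBlocks_right]
      refine Finset.sum_congr rfl (fun i hi => ?_)
      simp only [Finset.mem_filter] at hi
      have : σ i = 1 := by omega
      rw [this, hv2, vmv_inr]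
    rw [h1, h2, fromBlocks_add]
    simp
  have compl_sum : ∀ T : Finset (Fin m),
      ∑ i ∈ Tᶜ, vecMulVec (u i) (u i) =
        (1 : Matrix (Fin d) (Fin d) ℝ) - ∑ i ∈ T, vecMulVec (u i) (u i) := by
    intro T
    have := Finset.sum_add_sum_compl T (fun i => vecMulVec (u i) (u i))
    rw [hu] at this
    linear_combination (norm := abel) this
  constructor
  · rintro ⟨σ, hσ⟩
    refine ⟨Finset.univ.filter (fun i => σ i = 0), ?_, ?_⟩
    all_goals {
      rw [key σ] at hσ
      have hc : (Finset.univ.filter (fun i => ¬ σ i = 0)) =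
          (Finset.univ.filter (fun i => σ i = 0))ᶜ := by
        ext i; simp
      rw [hc, compl_sum] at hσ
      set A := ∑ i ∈ Finset.univ.filter (fun i => σ i = 0), vecMulVec (u i) (u i) with hA
      have hblk : fromBlocks A 0 0 (1 - A) -
          (1 / 2 - δ) • (1 : Matrix (Fin d ⊕ Fin d) (Fin d ⊕ Fin d) ℝ) =
          fromBlocks (A - (1/2 - δ) • 1) 0 0 ((1 - A) - (1/2 - δ) • 1) := by
        rw [← fromBlocks_one, fromBlocks_smul]
        ext (i | i) (j | j) <;> simp [fromBlocks]
      rw [hblk, posSemidef_fromBlocks_diag, heq_aux] at hσ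
      first
      | exact hσ.1
      | exact hσ.2
    }
  · rintro ⟨T, hT1, hT2⟩
    refine ⟨fun i => if i ∈ T then 0 else 1, ?_⟩
    rw [key]
    have hfil : (Finset.univ.filter (fun i => (if i ∈ T then (0 : Fin 2) else 1) = 0)) = T := by
      ext i
      by_cases h : i ∈ T <;> simp [h]
    have hfil' : (Finset.univ.filter (fun i => ¬ (if i ∈ T then (0 : Fin 2) else 1) = 0)) = Tᶜ := by
      ext i
      by_cases h : i ∈ T <;> simp [h]
    rw [hfil, hfil', compl_sum]
    set A := ∑ i ∈ T, vecMulVec (u i) (u i) with hA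
    have hblk : fromBlocks A 0 0 (1 - A) -
        (1 / 2 - δ) • (1 : Matrix (Fin d ⊕ Fin d) (Fin d ⊕ Fin d) ℝ) =
        fromBlocks (A - (1/2 - δ) • 1) 0 0 ((1 - A) - (1/2 - δ) • 1) := by
      rw [← fromBlocks_one, fromBlocks_smul]
      ext (i | i) (j | j) <;> simp [fromBlocks]
    rw [hblk, posSemidef_fromBlocks_diag, heq_aux]
    exact ⟨hT1, hT2⟩
end
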